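/- arXiv:2007.15482 — 2 statements merged into one kernel-verified Lean document; each statement's English description precedes it below -/
import Mathlib

section
/- Let p be a prime, k an even integer ≥ 2, and let α, β be the roots of x^2 - ax + p^{k-1} over ℂ with a ∈ ℤ and a^2 - 4p^{k-1} ≠ 0. Suppose u ≥ 1 is the least positive integer with α^{u+1} = β^{u+1}. Then u is odd. -/
/-!
If `u` were even, `x := α^(u+1) = β^(u+1)` would satisfy `2x = α^(u+1) + β^(u+1) ∈ ℤ` (a Dickson
polynomial evaluated at `α + β`, with parameter `αβ`) and `x² = (αβ)^(u+1) = p^((k-1)(u+1))`. So an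
odd power of `p` would be a square in `ℚ`, hence in `ℕ`, contradicting unique factorization.
-/

open Polynomial

theorem Polynomial.dickson_one_eval_add {R : Type*} [CommRing R] (x y : R) :
    ∀ n, (dickson 1 (x * y) n).eval (x + y) = x ^ n + y ^ n
  | 0 => by simp only [pow_zero, dickson_zero]; norm_num
  | 1 => by simp only [eval_X, dickson_one, pow_one]
  | n + 2 => by
    simp only [eval_sub, eval_mul, dickson_one_eval_add x y, eval_X, dickson_add_two, eval_C]
    ring

theorem exists_intCast_eq_pow_add_pow {R : Type*} [CommRing R] {α β : R} {a q : ℤ}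
    (hsum : α + β = a) (hprod : α * β = q) (n : ℕ) : ∃ s : ℤ, (s : R) = α ^ n + β ^ n :=
  ⟨(dickson 1 q n).eval a, by
    rw [← dickson_one_eval_add, hsum, hprod, ← eq_intCast (Int.castRingHom R) q, ← map_dickson,
      eval_intCast_map, eq_intCast, Int.cast_id]⟩

theorem Nat.Prime.even_of_isSquare_pow {p n : ℕ} (hp : p.Prime) (h : IsSquare (p ^ n)) :
    Even n := by
  obtain ⟨r, hr⟩ := h
  have hr0 : r ≠ 0 := by rintro rfl; exact pow_ne_zero n hp.ne_zero hr
  refine ⟨r.factorization p, ?_⟩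
  simpa [hp.factorization_self, Nat.factorization_mul hr0 hr0] using congrArg (·.factorization p) hr

theorem isSquare_of_sq_eq_natCast_of_two_mul_eq_intCast {K : Type*} [Field K] [CharZero K]
    {x : K} {s : ℤ} {n : ℕ} (hs : 2 * x = s) (hx : x ^ 2 = n) : IsSquare n := by
  have hxq : x = ((s / 2 : ℚ) : K) := by push_cast; rw [← hs]; ring
  rw [← Rat.isSquare_natCast_iff]
  refine ⟨s / 2, ?_⟩
  rw [← sq]
  exact_mod_cast (hxq ▸ hx).symm

theorem stmt_2_general (p k : ℕ) (hp : p.Prime) (hk : Even k) (hk2 : 2 ≤ k)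
    (a : ℤ) (α β : ℂ)
    (hsum : α + β = (a : ℂ)) (hprod : α * β = (p : ℂ) ^ (k - 1))
    (u : ℕ) (hroot : α ^ (u + 1) = β ^ (u + 1)) :
    Odd u := by
  by_contra hu
  have hN : Odd ((k - 1) * (u + 1)) :=
    (Nat.Even.sub_odd (by omega) hk odd_one).mul (Nat.not_odd_iff_even.mp hu).add_one
  obtain ⟨s, hs⟩ := exists_intCast_eq_pow_add_pow (q := (p : ℤ) ^ (k - 1)) hsum
    (by push_cast; exact hprod) (u + 1)
  have htwice : 2 * α ^ (u + 1) = s := by rw [hs, ← hroot]; ring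
  have hsq : (α ^ (u + 1)) ^ 2 = ((p ^ ((k - 1) * (u + 1)) : ℕ) : ℂ) := by
    rw [sq]
    nth_rw 2 [hroot]
    rw [← mul_pow, hprod]
    push_cast
    ring
  exact Nat.not_even_iff_odd.mpr hN
    (hp.even_of_isSquare_pow (isSquare_of_sq_eq_natCast_of_two_mul_eq_intCast htwice hsq))

/-- Let `p` be prime, `k ≥ 2` even, and `α, β ∈ ℂ` the roots of `x^2 - a x + p^(k-1)`
with `a ∈ ℤ` and nonzero discriminant. If `u ≥ 1` is the least positive integer with
`α^(u+1) = β^(u+1)`, then `u` is odd. -/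
theorem stmt_2 (p k : ℕ) (hp : p.Prime) (hk : Even k) (hk2 : 2 ≤ k)
    (a : ℤ) (α β : ℂ)
    (hsum : α + β = (a : ℂ)) (hprod : α * β = (p : ℂ) ^ (k - 1))
    (hdisc : a ^ 2 - 4 * (p : ℤ) ^ (k - 1) ≠ 0)
    (u : ℕ) (hu : 1 ≤ u) (hroot : α ^ (u + 1) = β ^ (u + 1))
    (hleast : ∀ v : ℕ, 1 ≤ v → α ^ (v + 1) = β ^ (v + 1) → u ≤ v) :
    Odd u :=
  stmt_2_general p k hp hk hk2 a α β hsum hprod u hroot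
end

section
/- Let f(x) = x^2 + ax + b ∈ ℤ[x] with b ≠ 0, and let α, β ∈ ℂ be its roots. Suppose neither α, nor β, nor αβ^{-1} is a root of unity. Then for every T ≥ 1, the number of primes ℓ such that f mod ℓ has a root in \overline{𝔽_ℓ} of multiplicative order ≤ T, or such that the ratio of the two roots of f mod ℓ has order ≤ T, is O(T^2 log M) for some constant M depending only on a and b. -/
/-- `x^2 + a x + b mod ℓ` has a root in `\overline{𝔽_ℓ}` of (positive) multiplicative
order at most `T`, or the ratio of its two roots has (positive) multiplicative order at
most `T`. The roots `x, y` are characterized by Vieta's relations `x + y = -a`,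
`x y = b`. -/
def badPrime (a b : ℤ) (T : ℕ) (ℓ : ℕ) [Fact ℓ.Prime] : Prop :=
  ∃ x y : AlgebraicClosure (ZMod ℓ),
    x + y = -(algebraMap (ZMod ℓ) (AlgebraicClosure (ZMod ℓ)) ((a : ZMod ℓ))) ∧
    x * y = algebraMap (ZMod ℓ) (AlgebraicClosure (ZMod ℓ)) ((b : ZMod ℓ)) ∧
    ((0 < orderOf x ∧ orderOf x ≤ T) ∨
     (0 < orderOf (x * y⁻¹) ∧ orderOf (x * y⁻¹) ≤ T))

/-! If `ℓ` is bad, a root `x` of `f mod ℓ` and its conjugate `y` satisfy `x^t = 1` or `x^t = y^t`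
for some `1 ≤ t ≤ T`, so `ℓ` divides `N_T = ∏_{t ≤ T} (α^t - 1)(β^t - 1)(α^t - β^t)^2`. This is an
integer, being symmetric in `α, β`, and it is nonzero since neither `α`, `β` nor `α/β` is a root of
unity. As `|N_T| ≤ (4(|a| + |b| + 1))^{3T²}` and every prime factor is at least `2`, `N_T` has
`O(T²)` prime factors. -/

open Finset

def lucasV (a b : ℤ) : ℕ → ℤ
  | 0 => 2
  | 1 => -a
  | n + 2 => -a * lucasV a b (n + 1) - b * lucasV a b n

theorem intCast_lucasV {R : Type*} [CommRing R] {a b : ℤ} {x y : R}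
    (hsum : x + y = -(a : R)) (hprod : x * y = (b : R)) : ∀ n, (lucasV a b n : R) = x ^ n + y ^ n
  | 0 => by norm_num [lucasV]
  | 1 => by simp [lucasV, hsum]
  | n + 2 => by
    rw [lucasV, Int.cast_sub, Int.cast_mul, Int.cast_mul, intCast_lucasV hsum hprod (n + 1),
      intCast_lucasV hsum hprod n, Int.cast_neg, ← hsum, ← hprod]
    ring

theorem abs_lucasV_le (a b : ℤ) : ∀ n, |lucasV a b n| ≤ 2 * (|a| + |b| + 1) ^ n
  | 0 => by simp [lucasV]
  | 1 => by simp only [lucasV, abs_neg, pow_one]; linarith [abs_nonneg a, abs_nonneg b]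
  | n + 2 => by
    set M := |a| + |b| + 1
    have hM : |a| * M + |b| ≤ M ^ 2 := by nlinarith [abs_nonneg a, abs_nonneg b]
    calc |lucasV a b (n + 2)| ≤ |a| * |lucasV a b (n + 1)| + |b| * |lucasV a b n| := by
          rw [lucasV, ← abs_neg a, ← abs_mul, ← abs_mul]
          exact abs_sub _ _
      _ ≤ |a| * (2 * M ^ (n + 1)) + |b| * (2 * M ^ n) := by
          gcongr
          exacts [abs_lucasV_le a b (n + 1), abs_lucasV_le a b n]
      _ = 2 * M ^ n * (|a| * M + |b|) := by ring
      _ ≤ 2 * M ^ n * M ^ 2 := by gcongr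
      _ = 2 * M ^ (n + 2) := by ring

def smallOrderFactor (a b : ℤ) (t : ℕ) : ℤ :=
  (b ^ t - lucasV a b t + 1) * (lucasV a b t ^ 2 - 4 * b ^ t)

def smallOrderProduct (a b : ℤ) (T : ℕ) : ℤ :=
  ∏ t ∈ Icc 1 T, smallOrderFactor a b t

theorem intCast_smallOrderFactor {R : Type*} [CommRing R] {a b : ℤ} {x y : R}
    (hsum : x + y = -(a : R)) (hprod : x * y = (b : R)) (t : ℕ) :
    (smallOrderFactor a b t : R) = (x ^ t - 1) * (y ^ t - 1) * (x ^ t - y ^ t) ^ 2 := by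
  rw [smallOrderFactor]
  push_cast
  rw [intCast_lucasV hsum hprod, ← hprod]
  ring

theorem intCast_smallOrderProduct_eq_zero_iff {R : Type*} [CommRing R] [IsDomain R] {a b : ℤ}
    {x y : R} (hsum : x + y = -(a : R)) (hprod : x * y = (b : R)) (T : ℕ) :
    (smallOrderProduct a b T : R) = 0 ↔ ∃ t ∈ Icc 1 T, x ^ t = 1 ∨ y ^ t = 1 ∨ x ^ t = y ^ t := by
  simp only [smallOrderProduct, Int.cast_prod, intCast_smallOrderFactor hsum hprod,
    prod_eq_zero_iff, mul_eq_zero, pow_eq_zero_iff two_ne_zero, sub_eq_zero, or_assoc]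

theorem pow_orderOf_mul_inv_eq_pow {G₀ : Type*} [CommGroupWithZero G₀] {x y : G₀}
    (h : 0 < orderOf (x * y⁻¹)) : x ^ orderOf (x * y⁻¹) = y ^ orderOf (x * y⁻¹) := by
  have hy : y ≠ 0 := by
    rintro rfl
    simp [orderOf_zero] at h
  rw [← mul_inv_eq_one₀ (pow_ne_zero _ hy), ← inv_pow, ← mul_pow, pow_orderOf_eq_one]

theorem badPrime_dvd_smallOrderProduct {a b : ℤ} {T ℓ : ℕ} [Fact ℓ.Prime]
    (hbad : badPrime a b T ℓ) : (ℓ : ℤ) ∣ smallOrderProduct a b T := by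
  obtain ⟨x, y, hsum, hprod, hord⟩ := hbad
  rw [map_intCast] at hsum hprod
  rw [← ZMod.intCast_zmod_eq_zero_iff_dvd,
    ← (algebraMap (ZMod ℓ) (AlgebraicClosure (ZMod ℓ))).injective.eq_iff, map_intCast, map_zero,
    intCast_smallOrderProduct_eq_zero_iff hsum hprod]
  rcases hord with ⟨hpos, hle⟩ | ⟨hpos, hle⟩
  · exact ⟨orderOf x, mem_Icc.2 ⟨hpos, hle⟩, .inl (pow_orderOf_eq_one x)⟩
  · exact ⟨_, mem_Icc.2 ⟨hpos, hle⟩, .inr (.inr (pow_orderOf_mul_inv_eq_pow hpos))⟩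

theorem abs_smallOrderFactor_le (a b : ℤ) {t : ℕ} (ht : 1 ≤ t) :
    |smallOrderFactor a b t| ≤ (4 * (|a| + |b| + 1)) ^ (3 * t) := by
  set M := |a| + |b| + 1
  have hP : 1 ≤ M ^ t := one_le_pow₀ (by linarith [abs_nonneg a, abs_nonneg b])
  have hb : |b ^ t| ≤ M ^ t := by
    rw [abs_pow]; exact pow_le_pow_left₀ (abs_nonneg b) (by linarith [abs_nonneg a]) t
  have hV := abs_lucasV_le a b t
  have h64 : (64 : ℤ) ≤ 64 ^ t := le_self_pow₀ (by norm_num) (by omega)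
  calc |smallOrderFactor a b t|
      ≤ (|b ^ t| + |lucasV a b t| + 1) * (|lucasV a b t| ^ 2 + 4 * |b ^ t|) := by
        rw [smallOrderFactor, abs_mul]
        gcongr
        · exact (abs_add_le _ _).trans (by gcongr; exacts [abs_sub _ _, abs_one.le])
        · exact (abs_sub _ _).trans (by rw [abs_mul, abs_pow]; norm_num)
    _ ≤ (M ^ t + 2 * M ^ t + M ^ t) * ((2 * M ^ t) ^ 2 + 4 * M ^ t) := by gcongr
    _ ≤ 64 * (M ^ t) ^ 3 := by nlinarith
    _ ≤ 64 ^ t * (M ^ t) ^ 3 := by gcongr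
    _ = (4 * M) ^ (3 * t) := by rw [mul_pow, pow_mul, pow_mul']; norm_num

theorem abs_smallOrderProduct_le (a b : ℤ) (T : ℕ) :
    |smallOrderProduct a b T| ≤ (4 * (|a| + |b| + 1)) ^ (3 * T * T) := by
  have hK : 1 ≤ 4 * (|a| + |b| + 1) := by linarith [abs_nonneg a, abs_nonneg b]
  calc |smallOrderProduct a b T| = ∏ t ∈ Icc 1 T, |smallOrderFactor a b t| := abs_prod _ _
    _ ≤ ∏ _t ∈ Icc 1 T, (4 * (|a| + |b| + 1)) ^ (3 * T) := by
        refine prod_le_prod (fun _ _ ↦ abs_nonneg _) fun t ht ↦ ?_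
        obtain ⟨ht1, htT⟩ := mem_Icc.1 ht
        exact (abs_smallOrderFactor_le a b ht1).trans (pow_le_pow_right₀ hK (by omega))
    _ = (4 * (|a| + |b| + 1)) ^ (3 * T * T) := by rw [prod_const, Nat.card_Icc, ← pow_mul]; simp

theorem Nat.two_pow_card_primeFactors_le {n : ℕ} (hn : n ≠ 0) : 2 ^ #n.primeFactors ≤ n :=
  calc 2 ^ #n.primeFactors ≤ ∏ p ∈ n.primeFactors, p :=
        pow_card_le_prod _ _ _ fun _ hp ↦ (Nat.prime_of_mem_primeFactors hp).two_le
    _ ≤ n := Nat.le_of_dvd (Nat.pos_of_ne_zero hn) (Nat.prod_primeFactors_dvd n)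

theorem Int.card_primeFactors_natAbs_mul_log_two_le {N K : ℤ} {m : ℕ} (hN : N ≠ 0)
    (hNK : |N| ≤ K ^ m) : (#N.natAbs.primeFactors : ℝ) * Real.log 2 ≤ m * Real.log K := by
  have hpow : ((2 ^ #N.natAbs.primeFactors : ℕ) : ℤ) ≤ K ^ m :=
    (Nat.cast_le.2 (Nat.two_pow_card_primeFactors_le (Int.natAbs_ne_zero.2 hN))).trans
      (Int.natCast_natAbs N ▸ hNK)
  have hpowℝ : (2 : ℝ) ^ #N.natAbs.primeFactors ≤ (K : ℝ) ^ m := by exact_mod_cast hpow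
  rw [← Real.log_pow, ← Real.log_pow]
  exact Real.log_le_log (by positivity) hpowℝ

theorem smallOrderProduct_ne_zero {a b : ℤ} (hb : b ≠ 0) {α β : ℂ}
    (hsum : α + β = -(a : ℂ)) (hprod : α * β = (b : ℂ))
    (hα : ∀ t : ℕ, 1 ≤ t → α ^ t ≠ 1) (hβ : ∀ t : ℕ, 1 ≤ t → β ^ t ≠ 1)
    (hαβ : ∀ t : ℕ, 1 ≤ t → (α * β⁻¹) ^ t ≠ 1) (T : ℕ) : smallOrderProduct a b T ≠ 0 := by
  have hβ0 : β ≠ 0 := right_ne_zero_of_mul (hprod ▸ Int.cast_ne_zero.2 hb)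
  intro hN
  obtain ⟨t, ht, hroot⟩ := (intCast_smallOrderProduct_eq_zero_iff hsum hprod T).1 (by simp [hN])
  have ht1 := (mem_Icc.1 ht).1
  rcases hroot with h | h | h
  · exact hα t ht1 h
  · exact hβ t ht1 h
  · exact hαβ t ht1 (by rw [mul_pow, inv_pow, h, mul_inv_cancel₀ (pow_ne_zero t hβ0)])

/-- Let `f = x² + a x + b ∈ ℤ[x]` with `b ≠ 0` whose complex roots `α, β` are such that
neither `α`, nor `β`, nor `α β⁻¹` is a root of unity. Then there is a constant `C > 0`
(depending only on `a, b`) such that for every `T ≥ 2`, the set of primes `ℓ` for which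
`f mod ℓ` has a root of multiplicative order `≤ T` in `\overline{𝔽_ℓ}`, or the ratio of
its two roots has order `≤ T`, is finite of cardinality at most `C · T² · log T`. -/
theorem stmt_14 (a b : ℤ) (hb : b ≠ 0) (α β : ℂ)
    (hsum : α + β = -(a : ℂ)) (hprod : α * β = (b : ℂ))
    (hα : ∀ t : ℕ, 1 ≤ t → α ^ t ≠ 1)
    (hβ : ∀ t : ℕ, 1 ≤ t → β ^ t ≠ 1)
    (hαβ : ∀ t : ℕ, 1 ≤ t → (α * β⁻¹) ^ t ≠ 1) :
    ∃ C : ℝ, 0 < C ∧ ∀ T : ℕ, 2 ≤ T →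
      {ℓ : ℕ | ∃ h : Fact ℓ.Prime, @badPrime a b T ℓ h}.Finite ∧
      ((Nat.card {ℓ : ℕ | ∃ h : Fact ℓ.Prime, @badPrime a b T ℓ h} : ℕ) : ℝ)
        ≤ C * (T : ℝ) ^ 2 * Real.log T := by
  set K : ℤ := 4 * (|a| + |b| + 1)
  have hlogK : 0 < Real.log K := Real.log_pos (by norm_cast; linarith [abs_nonneg a, abs_nonneg b])
  have hlog2 : 0 < Real.log 2 := Real.log_pos one_lt_two
  refine ⟨3 * Real.log K / Real.log 2 ^ 2, by positivity, fun T hT ↦ ?_⟩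
  set N := smallOrderProduct a b T
  have hN : N ≠ 0 := smallOrderProduct_ne_zero hb hsum hprod hα hβ hαβ T
  have hsub : {ℓ : ℕ | ∃ h : Fact ℓ.Prime, @badPrime a b T ℓ h} ⊆ N.natAbs.primeFactors :=
    fun ℓ ⟨hℓ, hbad⟩ ↦ Nat.mem_primeFactors.2
      ⟨hℓ.out, Int.natCast_dvd.1 (badPrime_dvd_smallOrderProduct hbad), Int.natAbs_ne_zero.2 hN⟩
  refine ⟨(finite_toSet _).subset hsub, ?_⟩
  have hcard :
      Nat.card {ℓ : ℕ | ∃ h : Fact ℓ.Prime, @badPrime a b T ℓ h} ≤ #N.natAbs.primeFactors :=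
    Nat.card_coe_set_eq _ ▸ (Set.ncard_le_ncard hsub).trans (Set.ncard_coe_finset _).le
  have hω := Int.card_primeFactors_natAbs_mul_log_two_le hN (abs_smallOrderProduct_le a b T)
  have hlogT : Real.log 2 ≤ Real.log T := Real.log_le_log two_pos (by exact_mod_cast hT)
  rw [div_mul_eq_mul_div, div_mul_eq_mul_div, le_div_iff₀ (by positivity)]
  calc ((Nat.card _ : ℕ) : ℝ) * Real.log 2 ^ 2
        ≤ #N.natAbs.primeFactors * Real.log 2 * Real.log 2 := by
        rw [sq, ← mul_assoc]; gcongr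
    _ ≤ ((3 * T * T : ℕ) : ℝ) * Real.log K * Real.log T := by gcongr
    _ = 3 * Real.log K * T ^ 2 * Real.log T := by push_cast; ring
end
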